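/- arXiv:1203.1214 — 6 statements merged into one kernel-verified Lean document; each statement's English description precedes it below -/
import Mathlib

section
/- For all complex numbers z₁, z₂ and all real a with 0 < a < 1, the chordal distance κ(z₁,z₂) := |z₁ - z₂| / (√(1+|z₁|²) · √(1+|z₂|²)) satisfies κ(z₁,z₂) ≥ min{ (a²/(1+a²))·|z₁ - z₂|, (a²/(1+a²))·|1/z₁ - 1/z₂|, (1-a²)/(1+a²) }, where in the case z₁ = 0 or z₂ = 0 the middle term is interpreted as only applying when both z₁, z₂ are nonzero (equivalently, the inequality holds with the convention that the middle quantity is +∞ if z₁ = 0 or z₂ = 0). -/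
/-!
Cover the plane by three regimes. If both points lie in the disc of radius `1/a`, the
denominator of `κ` is at most `1 + 1/a²`. If both lie outside the disc of radius `a`, the
inversion `z ↦ 1/z`, an isometry of `κ`, brings them into the first regime. Otherwise one point
lies in `|z| ≤ a` and the other in `|w| ≥ 1/a`; writing `r = |z|`, `R = |w|`, Lagrange's identity
`(1 + r²)(1 + R²) = (R - r)² + (1 + rR)²` together with `2a(R - r) ≥ (1 - a²)(1 + rR)` gives
`κ ≥ (R - r)/√((1 + r²)(1 + R²)) ≥ (1 - a²)/(1 + a²)`.
-/

noncomputable def chordalDist (z w : ℂ) : ℝ :=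
  ‖z - w‖ / (Real.sqrt (1 + ‖z‖ ^ 2) * Real.sqrt (1 + ‖w‖ ^ 2))

theorem chordalDist_comm (z w : ℂ) : chordalDist z w = chordalDist w z := by
  rw [chordalDist, chordalDist, norm_sub_rev, mul_comm]

theorem sqrt_one_add_norm_inv_sq {z : ℂ} (hz : z ≠ 0) :
    Real.sqrt (1 + ‖z⁻¹‖ ^ 2) = Real.sqrt (1 + ‖z‖ ^ 2) / ‖z‖ := by
  have hz' : 0 < ‖z‖ := norm_pos_iff.2 hz
  rw [norm_inv, ← Real.sqrt_sq hz'.le, ← Real.sqrt_div (by positivity), Real.sqrt_sq hz'.le]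
  congr 1
  field_simp
  ring

theorem chordalDist_inv_inv {z w : ℂ} (hz : z ≠ 0) (hw : w ≠ 0) :
    chordalDist z⁻¹ w⁻¹ = chordalDist z w := by
  have hsub : ‖z⁻¹ - w⁻¹‖ = ‖z - w‖ / (‖z‖ * ‖w‖) := by
    rw [inv_sub_inv hz hw, norm_div, norm_mul, norm_sub_rev]
  rw [chordalDist, chordalDist, hsub, sqrt_one_add_norm_inv_sq hz, sqrt_one_add_norm_inv_sq hw]
  field_simp

theorem norm_sub_div_le_chordalDist {z w : ℂ} {R : ℝ} (hz : ‖z‖ ≤ R) (hw : ‖w‖ ≤ R) :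
    ‖z - w‖ / (1 + R ^ 2) ≤ chordalDist z w := by
  have hR : 0 ≤ R := (norm_nonneg z).trans hz
  calc ‖z - w‖ / (1 + R ^ 2)
      = ‖z - w‖ / (Real.sqrt (1 + R ^ 2) * Real.sqrt (1 + R ^ 2)) := by
        rw [Real.mul_self_sqrt (by positivity)]
    _ ≤ chordalDist z w := by
        unfold chordalDist
        gcongr

theorem one_sub_sq_mul_sqrt_le {a r R : ℝ} (ha : 0 < a) (ha1 : a ≤ 1) (hr : 0 ≤ r)
    (hra : r ≤ a) (haR : a⁻¹ ≤ R) :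
    (1 - a ^ 2) * (Real.sqrt (1 + r ^ 2) * Real.sqrt (1 + R ^ 2)) ≤ (1 + a ^ 2) * (R - r) := by
  have hRa : 1 ≤ a * R := (inv_le_iff_one_le_mul₀' ha).1 haR
  have hR : 0 ≤ R := by nlinarith
  have hRr : r ≤ R := by nlinarith
  have lagrange : (1 + r ^ 2) * (1 + R ^ 2) = (R - r) ^ 2 + (1 + r * R) ^ 2 := by ring
  -- `a` times the difference is `(1 + a²)(a R - 1) a + (1 + a²)(a - r) + (1 - a²)(a - r)(a R - 1)`
  have htan : (1 - a ^ 2) * (1 + r * R) ≤ 2 * a * (R - r) := by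
    nlinarith [mul_nonneg (sub_nonneg.2 hra) (sub_nonneg.2 hRa)]
  have hsq : (1 - a ^ 2) ^ 2 * ((1 + r ^ 2) * (1 + R ^ 2)) ≤ ((1 + a ^ 2) * (R - r)) ^ 2 := by
    have hcos : 0 ≤ (1 - a ^ 2) * (1 + r * R) := mul_nonneg (by nlinarith) (by positivity)
    rw [lagrange]
    nlinarith [pow_le_pow_left₀ hcos htan 2]
  rw [← Real.sqrt_mul (by positivity)]
  refine le_of_pow_le_pow_left₀ two_ne_zero (by positivity) ?_
  rwa [mul_pow, Real.sq_sqrt (by positivity)]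

theorem one_sub_sq_div_le_chordalDist {z w : ℂ} {a : ℝ} (ha : 0 < a) (ha1 : a ≤ 1)
    (hz : ‖z‖ ≤ a) (hw : a⁻¹ ≤ ‖w‖) :
    (1 - a ^ 2) / (1 + a ^ 2) ≤ chordalDist z w := by
  rw [chordalDist, div_le_div_iff₀ (by positivity) (by positivity), mul_comm _ (1 + a ^ 2)]
  calc (1 - a ^ 2) * (Real.sqrt (1 + ‖z‖ ^ 2) * Real.sqrt (1 + ‖w‖ ^ 2))
      ≤ (1 + a ^ 2) * (‖w‖ - ‖z‖) := one_sub_sq_mul_sqrt_le ha ha1 (norm_nonneg z) hz hw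
    _ ≤ (1 + a ^ 2) * ‖z - w‖ := by
        gcongr
        rw [norm_sub_rev]
        exact norm_sub_norm_le w z

theorem mul_norm_sub_le_chordalDist {z w : ℂ} {a : ℝ} (ha : 0 < a) (hz : ‖z‖ ≤ a⁻¹)
    (hw : ‖w‖ ≤ a⁻¹) :
    a ^ 2 / (1 + a ^ 2) * ‖z - w‖ ≤ chordalDist z w := by
  convert norm_sub_div_le_chordalDist hz hw using 1
  field_simp
  ring

theorem min_le_chordalDist_of_norm_le {z w : ℂ} {a : ℝ} (ha : 0 < a) (ha1 : a ≤ 1)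
    (hz : ‖z‖ ≤ a) :
    min (a ^ 2 / (1 + a ^ 2) * ‖z - w‖) ((1 - a ^ 2) / (1 + a ^ 2)) ≤ chordalDist z w := by
  rcases le_or_gt ‖w‖ a⁻¹ with hw | hw
  · have ha_le_inv : a ≤ a⁻¹ := ha1.trans ((one_le_inv₀ ha).2 ha1)
    exact (min_le_left _ _).trans (mul_norm_sub_le_chordalDist ha (hz.trans ha_le_inv) hw)
  · exact (min_le_right _ _).trans (one_sub_sq_div_le_chordalDist ha ha1 hz hw.le)

theorem min_le_chordalDist_of_norm_le_or_norm_le {z w : ℂ} {a : ℝ} (ha : 0 < a) (ha1 : a ≤ 1)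
    (h : ‖z‖ ≤ a ∨ ‖w‖ ≤ a) :
    min (a ^ 2 / (1 + a ^ 2) * ‖z - w‖) ((1 - a ^ 2) / (1 + a ^ 2)) ≤ chordalDist z w := by
  rcases h with hz | hw
  · exact min_le_chordalDist_of_norm_le ha ha1 hz
  · rw [chordalDist_comm, norm_sub_rev]
    exact min_le_chordalDist_of_norm_le ha ha1 hw

/-- Partington's lower bound for the chordal metric
`κ(z₁,z₂) = ‖z₁ - z₂‖ / (√(1+‖z₁‖²)·√(1+‖z₂‖²))` on `ℂ`:
for `0 < a < 1` it is bounded below by the minimum of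
`(a²/(1+a²))·‖z₁-z₂‖`, `(a²/(1+a²))·‖1/z₁ - 1/z₂‖` and `(1-a²)/(1+a²)`,
where the middle term only applies when both `z₁, z₂` are nonzero
(it is `+∞` by convention when `z₁ = 0` or `z₂ = 0`). -/
theorem chordal_lower_bound (z₁ z₂ : ℂ) (a : ℝ) (ha0 : 0 < a) (ha1 : a < 1) :
    (z₁ ≠ 0 → z₂ ≠ 0 →
      ‖z₁ - z₂‖ / (Real.sqrt (1 + ‖z₁‖ ^ 2) * Real.sqrt (1 + ‖z₂‖ ^ 2)) ≥
        min (min (a ^ 2 / (1 + a ^ 2) * ‖z₁ - z₂‖)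
              (a ^ 2 / (1 + a ^ 2) * ‖z₁⁻¹ - z₂⁻¹‖))
          ((1 - a ^ 2) / (1 + a ^ 2))) ∧
    ((z₁ = 0 ∨ z₂ = 0) →
      ‖z₁ - z₂‖ / (Real.sqrt (1 + ‖z₁‖ ^ 2) * Real.sqrt (1 + ‖z₂‖ ^ 2)) ≥
        min (a ^ 2 / (1 + a ^ 2) * ‖z₁ - z₂‖) ((1 - a ^ 2) / (1 + a ^ 2))) := by
  refine ⟨fun hz₁ hz₂ => ?_, fun h => ?_⟩
  · by_cases hsmall : ‖z₁‖ ≤ a ∨ ‖z₂‖ ≤ a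
    · exact (min_le_min_right _ (min_le_left _ _)).trans
        (min_le_chordalDist_of_norm_le_or_norm_le ha0 ha1.le hsmall)
    push Not at hsmall
    have hinv {z : ℂ} (hz : a < ‖z‖) : ‖z⁻¹‖ ≤ a⁻¹ := by
      rw [norm_inv]
      exact inv_anti₀ ha0 hz.le
    calc _ ≤ a ^ 2 / (1 + a ^ 2) * ‖z₁⁻¹ - z₂⁻¹‖ := (min_le_left _ _).trans (min_le_right _ _)
      _ ≤ chordalDist z₁⁻¹ z₂⁻¹ := mul_norm_sub_le_chordalDist ha0 (hinv hsmall.1) (hinv hsmall.2)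
      _ = chordalDist z₁ z₂ := chordalDist_inv_inv hz₁ hz₂
  · refine min_le_chordalDist_of_norm_le_or_norm_le ha0 ha1.le ?_
    rcases h with rfl | rfl <;> simp [ha0.le]
end

section
/- If z₁, z₂ are complex numbers with |z₁| ≤ a and |z₂| ≥ 1/a for some real a with 0 < a < 1, then the chordal distance satisfies |z₁ - z₂| / (√(1+|z₁|²)·√(1+|z₂|²)) ≥ (1-a²)/(1+a²). -/
/-! With `r = ‖z₁‖ ≤ a` and `s = ‖z₂‖ ≥ 1/a`, the numerator is at least `s - r ≥ (1 - a²) s`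
(as `r ≤ a ≤ a² s`), while `1 + r² ≤ 1 + a²` and `1 + s² ≤ (1 + a²) s²` bound the denominator
by `(1 + a²) s`. -/

section

variable {E : Type*} [SeminormedAddCommGroup E]

lemma one_sub_sq_mul_norm_le_norm_sub {z w : E} {a : ℝ} (hz : ‖z‖ ≤ a) (hw : 1 ≤ a * ‖w‖) :
    (1 - a ^ 2) * ‖w‖ ≤ ‖z - w‖ := by
  have ha : 0 ≤ a := (norm_nonneg z).trans hz
  have hzw : ‖w‖ - ‖z‖ ≤ ‖z - w‖ := norm_sub_rev w z ▸ norm_sub_norm_le w z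
  nlinarith [mul_le_mul_of_nonneg_left hw ha]

end

lemma Real.sqrt_one_add_sq_le_sqrt_one_add_sq_mul {s a : ℝ} (hs : 0 ≤ s) (has : 1 ≤ a * s) :
    √(1 + s ^ 2) ≤ √(1 + a ^ 2) * s := by
  rw [← Real.sqrt_sq hs, ← Real.sqrt_mul (by positivity), Real.sqrt_sq hs]
  exact Real.sqrt_le_sqrt (by nlinarith)

lemma Real.sqrt_one_add_sq_mul_sqrt_one_add_sq_le {r s a : ℝ} (hr : 0 ≤ r) (hra : r ≤ a)
    (hs : 0 ≤ s) (has : 1 ≤ a * s) :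
    √(1 + r ^ 2) * √(1 + s ^ 2) ≤ (1 + a ^ 2) * s :=
  calc √(1 + r ^ 2) * √(1 + s ^ 2) ≤ √(1 + a ^ 2) * (√(1 + a ^ 2) * s) := by
        gcongr
        exact Real.sqrt_one_add_sq_le_sqrt_one_add_sq_mul hs has
    _ = (1 + a ^ 2) * s := by rw [← mul_assoc, Real.mul_self_sqrt (by positivity)]

theorem chordal_caps_distance_general (z₁ z₂ : ℂ) (a : ℝ) (ha0 : 0 < a)
    (h₁ : ‖z₁‖ ≤ a) (h₂ : ‖z₂‖ ≥ 1 / a) :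
    ‖z₁ - z₂‖ / (Real.sqrt (1 + ‖z₁‖ ^ 2) * Real.sqrt (1 + ‖z₂‖ ^ 2)) ≥
      (1 - a ^ 2) / (1 + a ^ 2) := by
  have hw : 1 ≤ a * ‖z₂‖ := by rwa [ge_iff_le, div_le_iff₀' ha0] at h₂
  have hs : 0 < ‖z₂‖ := (one_div_pos.2 ha0).trans_le h₂
  calc (1 - a ^ 2) / (1 + a ^ 2) = (1 - a ^ 2) * ‖z₂‖ / ((1 + a ^ 2) * ‖z₂‖) :=
        (mul_div_mul_right _ _ hs.ne').symm
    _ ≤ ‖z₁ - z₂‖ / (√(1 + ‖z₁‖ ^ 2) * √(1 + ‖z₂‖ ^ 2)) :=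
        div_le_div₀ (norm_nonneg _) (one_sub_sq_mul_norm_le_norm_sub h₁ hw) (by positivity)
          (Real.sqrt_one_add_sq_mul_sqrt_one_add_sq_le (norm_nonneg _) h₁ hs.le hw)

/-- If `‖z₁‖ ≤ a` and `‖z₂‖ ≥ 1/a` with `0 < a < 1`, then the chordal distance
between `z₁` and `z₂` is at least `(1-a²)/(1+a²)`. -/
theorem chordal_caps_distance (z₁ z₂ : ℂ) (a : ℝ) (ha0 : 0 < a) (ha1 : a < 1)
    (h₁ : ‖z₁‖ ≤ a) (h₂ : ‖z₂‖ ≥ 1 / a) :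
    ‖z₁ - z₂‖ / (Real.sqrt (1 + ‖z₁‖ ^ 2) * Real.sqrt (1 + ‖z₂‖ ^ 2)) ≥
      (1 - a ^ 2) / (1 + a ^ 2) :=
  chordal_caps_distance_general z₁ z₂ a ha0 h₁ h₂
end

section
/- Let R be a commutative integral domain with 1, let p = n/d be an element of the field of fractions of R with n, d ∈ R, d ≠ 0, and let c ∈ R. If d - nc is invertible in R, then all four closed-loop transfer functions 1/(1-pc) = d(d-nc)⁻¹, p/(1-pc) = n(d-nc)⁻¹, c/(1-pc) = cd(d-nc)⁻¹, and pc/(1-pc) = -1 + d(d-nc)⁻¹ belong to R, i.e., the plant p is stabilized by c. -/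
/-! In the fraction field, `1 - (n / d) c = (d - n c) / d`, so `(1 - p c)⁻¹ = d w`; the other three
closed-loop maps are this one multiplied by `p`, `c` and `p c`. -/

section Field

variable {K : Type*} [Field K] {n d c w : K}

theorem inv_one_sub_div_mul_eq (hd : d ≠ 0) (hw : w * (d - n * c) = 1) :
    (1 - n / d * c)⁻¹ = d * w := by
  rw [eq_inv_of_mul_eq_one_left hw, div_mul_eq_mul_div, one_sub_div hd, inv_div, div_eq_mul_inv]

theorem div_one_sub_div_mul_eq (hd : d ≠ 0) (hw : w * (d - n * c) = 1) :
    n / d / (1 - n / d * c) = n * w := by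
  rw [div_eq_mul_inv _ (1 - _), inv_one_sub_div_mul_eq hd hw]
  field_simp

theorem div_mul_div_one_sub_div_mul_eq (hd : d ≠ 0) (hw : w * (d - n * c) = 1) :
    n / d * c / (1 - n / d * c) = -1 + d * w := by
  rw [div_eq_mul_inv _ (1 - _), inv_one_sub_div_mul_eq hd hw]
  field_simp
  linear_combination -hw

end Field

/-- If `p = n/d` in the field of fractions of an integral domain `R` and
`d - nc` is invertible in `R` with inverse `w`, then all four closed-loop
transfer functions `1/(1-pc)`, `p/(1-pc)`, `c/(1-pc)` and `pc/(1-pc)` lie in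
`R`, being the images of `dw`, `nw`, `cdw` and `-1 + dw` respectively. -/
theorem stabilized_of_isUnit {R : Type*} [CommRing R] [IsDomain R]
    (n d c w : R) (hd : d ≠ 0) (hw : w * (d - n * c) = 1) :
    letI K := FractionRing R
    letI ι := algebraMap R K
    letI p : K := ι n / ι d
    ι (d * w) = 1 / (1 - p * ι c) ∧
    ι (n * w) = p / (1 - p * ι c) ∧
    ι (c * d * w) = ι c / (1 - p * ι c) ∧
    ι (-1 + d * w) = p * ι c / (1 - p * ι c) := by
  set ι := algebraMap R (FractionRing R)
  have hd' : ι d ≠ 0 := (map_ne_zero_iff ι (IsFractionRing.injective R _)).mpr hd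
  have hw' : ι w * (ι d - ι n * ι c) = 1 := by
    simpa only [map_mul, map_sub, map_one] using congrArg ι hw
  simp only [map_mul, map_add, map_neg, map_one, one_div]
  refine ⟨?_, ?_, ?_, ?_⟩
  · exact (inv_one_sub_div_mul_eq hd' hw').symm
  · exact (div_one_sub_div_mul_eq hd' hw').symm
  · rw [div_eq_mul_inv, inv_one_sub_div_mul_eq hd' hw', mul_assoc]
  · exact (div_mul_div_one_sub_div_mul_eq hd' hw').symm
end

section
/- Let R be a commutative integral domain with 1 embedded as a full subring of a complex commutative unital semisimple Banach algebra S. Suppose p₀ = n₀/d₀ is a coprime factorization over R and c ∈ R stabilizes p₀, meaning g₀ := p₀/(1 - c p₀) ∈ R and 1/(1 - c p₀) ∈ R. Then d₀ - n₀ c is invertible in R, and hence for every character φ of S, φ(d₀) - φ(n₀)·φ(c) ≠ 0. -/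
open WeakDual

theorem denominator_unit_and_characters_general {R S : Type*} [CommRing R]
    [NormedCommRing S] [NormedAlgebra ℂ S]
    (ι : R →+* S)
    (n₀ d₀ c x y u v : R) (hxy : n₀ * x + d₀ * y = 1)
    (hu : u * (d₀ - n₀ * c) = d₀) (hv : v * (d₀ - n₀ * c) = n₀) :
    IsUnit (d₀ - n₀ * c) ∧
      ∀ φ : characterSpace ℂ S, φ (ι d₀) - φ (ι n₀) * φ (ι c) ≠ 0 := by
  have hcoprime : IsCoprime n₀ d₀ := ⟨x, y, by rw [mul_comm x, mul_comm y, hxy]⟩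
  have hunit : IsUnit (d₀ - n₀ * c) :=
    hcoprime.isUnit_of_dvd' (Dvd.intro_left v hv) (Dvd.intro_left u hu)
  refine ⟨hunit, fun φ => ?_⟩
  rw [← map_mul, ← map_mul, ← map_sub, ← map_sub]
  exact ((hunit.map ι).map φ).ne_zero

/-- Let `R` be an integral domain embedded as a full subring of a complex
commutative unital semisimple Banach algebra `S`.  If `p₀ = n₀/d₀` is a coprime
factorization over `R` and `c ∈ R` stabilizes `p₀`, i.e. both
`1/(1-cp₀) = d₀/(d₀-n₀c)` and `g₀ = p₀/(1-cp₀) = n₀/(d₀-n₀c)` lie in `R`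
(witnessed by `u` and `v`), then `d₀ - n₀c` is invertible in `R`, and hence
`φ(d₀) - φ(n₀)φ(c) ≠ 0` for every character `φ` of `S`. -/
theorem denominator_unit_and_characters {R S : Type*} [CommRing R] [IsDomain R]
    [NormedCommRing S] [NormedAlgebra ℂ S] [CompleteSpace S]
    (hsemi : ∀ s : S, (∀ φ : characterSpace ℂ S, φ s = 0) → s = 0)
    (ι : R →+* S) (hinj : Function.Injective ι)
    (hfull : ∀ x : R, IsUnit (ι x) → IsUnit x)
    (n₀ d₀ c x y u v : R) (hd₀ : d₀ ≠ 0) (hxy : n₀ * x + d₀ * y = 1)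
    (hu : u * (d₀ - n₀ * c) = d₀) (hv : v * (d₀ - n₀ * c) = n₀) :
    IsUnit (d₀ - n₀ * c) ∧
      ∀ φ : characterSpace ℂ S, φ (ι d₀) - φ (ι n₀) * φ (ι c) ≠ 0 :=
  denominator_unit_and_characters_general ι n₀ d₀ c x y u v hxy hu hv
end

section
/- Let n, d, n₀, d₀, c be complex numbers with d ≠ 0, n ≠ 0, c ≠ 0, d₀ ≠ 0, n₀ ≠ 0, and d - nc = 0. Suppose |c| ≤ k and |n₀/(d₀ - n₀c)| ≤ g where d₀ - n₀c ≠ 0, for positive reals k, g. Then |n/d - n₀/d₀| ≥ 1/(k(1+kg)). -/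
/-!
With `d = nc` the quotient `n/d` is `1/c`, and with `w = d₀ - n₀c` one has
`1/c - n₀/d₀ = 1/(c · (d₀/w))`. Since `d₀/w = 1 + c · (n₀/w)`, the denominator has norm at most
`k(1 + kg)`.
-/

theorem inv_sub_div_eq_inv_mul_div_sub {K : Type*} [Field K] {a b c : K} (hc : c ≠ 0)
    (hb : b ≠ 0) : c⁻¹ - a / b = (c * (b / (b - a * c)))⁻¹ := by
  field_simp

theorem norm_div_sub_mul_le {𝕜 : Type*} [NormedField 𝕜] {a b c : 𝕜} (hw : b - a * c ≠ 0) :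
    ‖b / (b - a * c)‖ ≤ 1 + ‖c‖ * ‖a / (b - a * c)‖ := by
  have h : b / (b - a * c) = 1 + c * (a / (b - a * c)) := by
    field_simp
    ring
  calc ‖b / (b - a * c)‖ = ‖1 + c * (a / (b - a * c))‖ := by rw [h]
    _ ≤ ‖(1 : 𝕜)‖ + ‖c * (a / (b - a * c))‖ := norm_add_le _ _
    _ = 1 + ‖c‖ * ‖a / (b - a * c)‖ := by rw [norm_one, norm_mul]

theorem estimate_eq4_general (n d n₀ d₀ c : ℂ) (k g : ℝ)
    (hn : n ≠ 0) (hc : c ≠ 0) (hd₀ : d₀ ≠ 0)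
    (hden : d - n * c = 0) (hden₀ : d₀ - n₀ * c ≠ 0)
    (hck : ‖c‖ ≤ k) (hg₀ : ‖n₀ / (d₀ - n₀ * c)‖ ≤ g) :
    ‖n / d - n₀ / d₀‖ ≥ 1 / (k * (1 + k * g)) := by
  have hnd : n / d = c⁻¹ := by
    rw [sub_eq_zero.mp hden, div_mul_cancel_left₀ hn]
  have hk : 0 ≤ k := (norm_nonneg c).trans hck
  have hratio : ‖d₀ / (d₀ - n₀ * c)‖ ≤ 1 + k * g :=
    (norm_div_sub_mul_le hden₀).trans (by gcongr)
  have hpos : 0 < ‖c‖ * ‖d₀ / (d₀ - n₀ * c)‖ := by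
    have := div_ne_zero hd₀ hden₀
    positivity
  rw [hnd, inv_sub_div_eq_inv_mul_div_sub hc hd₀, norm_inv, norm_mul, ← one_div]
  exact one_div_le_one_div_of_le hpos (mul_le_mul hck hratio (norm_nonneg _) hk)

/-- Estimate (4) in the proof of the main theorem: if `d = nc` with all
relevant quantities nonzero, `‖c‖ ≤ k` and `‖n₀/(d₀ - n₀c)‖ ≤ g`, then
`‖n/d - n₀/d₀‖ ≥ 1/(k(1+kg))`. -/
theorem estimate_eq4 (n d n₀ d₀ c : ℂ) (k g : ℝ) (hk : 0 < k) (hg : 0 < g)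
    (hd : d ≠ 0) (hn : n ≠ 0) (hc : c ≠ 0) (hd₀ : d₀ ≠ 0) (hn₀ : n₀ ≠ 0)
    (hden : d - n * c = 0) (hden₀ : d₀ - n₀ * c ≠ 0)
    (hck : ‖c‖ ≤ k) (hg₀ : ‖n₀ / (d₀ - n₀ * c)‖ ≤ g) :
    ‖n / d - n₀ / d₀‖ ≥ 1 / (k * (1 + k * g)) :=
  estimate_eq4_general n d n₀ d₀ c k g hn hc hd₀ hden hden₀ hck hg₀
end

section
/- Let α be a real number and z₁, z₂ ∈ 𝔻 (open unit disc). Then |α|·|z₁²z₂² - 1| / (√(|z₁z₂ - α|² + |z₁²z₂² - 1|²)·√(|z₁z₂|² + |z₁²z₂² - 1|²)) ≤ (2/√3)·|α|. Consequently, for the plants p_α = (z₁z₂ - α)/(z₁²z₂² - 1) and p₀ = z₁z₂/(z₁²z₂² - 1), the pointwise chordal distance at every point of the bidisc is at most (2/√3)·|α|. -/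
/-!
With `w = z₁z₂` and `k = |w| < 1`, the common denominator satisfies `|w² - 1| ≥ 1 - k²`.
The first square root is at least `|w² - 1|`, which cancels the numerator, and the second is
at least `√3/2`, because `k² + (1 - k²)² = (k² - 1/2)² + 3/4`.
-/

theorem one_sub_norm_sq_le_norm_sq_sub_one {R : Type*} [NormedRing R] [NormOneClass R] (w : R) :
    1 - ‖w‖ ^ 2 ≤ ‖w ^ 2 - 1‖ :=
  calc 1 - ‖w‖ ^ 2 ≤ ‖(1 : R)‖ - ‖w ^ 2‖ := by
        rw [norm_one]; linarith [norm_pow_le w 2]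
    _ ≤ ‖1 - w ^ 2‖ := norm_sub_norm_le _ _
    _ = ‖w ^ 2 - 1‖ := norm_sub_rev _ _

theorem three_div_four_le_sq_add_sq {k d : ℝ} (hk : k ^ 2 ≤ 1) (hd : 1 - k ^ 2 ≤ d) :
    3 / 4 ≤ k ^ 2 + d ^ 2 := by
  have hd' : (1 - k ^ 2) ^ 2 ≤ d ^ 2 := pow_le_pow_left₀ (by linarith) hd 2
  nlinarith [sq_nonneg (k ^ 2 - 1 / 2)]

theorem mul_div_sqrt_mul_sqrt_le {x n k d : ℝ} (hx : 0 ≤ x) (hd : 0 < d)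
    (hkd : 3 / 4 ≤ k ^ 2 + d ^ 2) :
    x * d / (√(n ^ 2 + d ^ 2) * √(k ^ 2 + d ^ 2)) ≤ 2 / √3 * x := by
  have hn : d ≤ √(n ^ 2 + d ^ 2) := Real.le_sqrt_of_sq_le (by nlinarith)
  have hk : √3 / 2 ≤ √(k ^ 2 + d ^ 2) := by
    rw [show √3 / 2 = √(3 / 4) by rw [Real.sqrt_div' _ (by norm_num : (0 : ℝ) ≤ 4),
      show (4 : ℝ) = 2 ^ 2 by norm_num, Real.sqrt_sq (by norm_num)]]
    exact Real.sqrt_le_sqrt hkd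
  calc x * d / (√(n ^ 2 + d ^ 2) * √(k ^ 2 + d ^ 2))
      ≤ x * d / (d * (√3 / 2)) :=
        div_le_div_of_nonneg_left (by positivity) (by positivity)
          (mul_le_mul hn hk (by positivity) (hd.le.trans hn))
    _ = 2 / √3 * x := by field_simp

/-- Pointwise chordal distance estimate on the bidisc between the perturbed
plant `p_α = (z₁z₂ - α)/(z₁²z₂² - 1)` and the nominal plant
`p₀ = z₁z₂/(z₁²z₂² - 1)`: it is at most `(2/√3)·|α|`. -/
theorem bidisc_perturbation_estimate (α : ℝ) (z₁ z₂ : ℂ)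
    (h₁ : ‖z₁‖ < 1) (h₂ : ‖z₂‖ < 1) :
    |α| * ‖z₁ ^ 2 * z₂ ^ 2 - 1‖ /
        (Real.sqrt (‖z₁ * z₂ - (α : ℂ)‖ ^ 2 + ‖z₁ ^ 2 * z₂ ^ 2 - 1‖ ^ 2) *
          Real.sqrt (‖z₁ * z₂‖ ^ 2 + ‖z₁ ^ 2 * z₂ ^ 2 - 1‖ ^ 2)) ≤
      2 / Real.sqrt 3 * |α| := by
  rw [show z₁ ^ 2 * z₂ ^ 2 = (z₁ * z₂) ^ 2 by ring]
  have hw : ‖z₁ * z₂‖ < 1 := by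
    rw [norm_mul]; exact mul_lt_one_of_nonneg_of_lt_one_left (norm_nonneg _) h₁ h₂.le
  have hw2 : ‖z₁ * z₂‖ ^ 2 < 1 := pow_lt_one₀ (norm_nonneg _) hw two_ne_zero
  have hden := one_sub_norm_sq_le_norm_sq_sub_one (z₁ * z₂)
  exact mul_div_sqrt_mul_sqrt_le (abs_nonneg α) (by linarith)
    (three_div_four_le_sq_add_sq hw2.le hden)
end
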